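/- Let 𝒢 be a groupoid with 𝒢₀ finite, A a unital 𝒢-graded algebra, X a finite split 𝒢-set via α, and fix x ∈ X with x ∈ X_e. With the (A #_α^𝒢 X, A^{𝒢_x})-bimodule ^xV = ⊕_{y∈X} V_{x,y} and the (A^{𝒢_x}, A #_α^𝒢 X)-bimodule V^x = ⊕_{y∈X} V_{y,x}, and the maps ( , ) : V^x ⊗_{A#_α^𝒢X} {^xV} → A^{𝒢_x}, (v,w) = Σ_{g∈𝒢_x}(vw)_g, and [ , ] : {^xV} ⊗_{A^{𝒢_x}} V^x → A #_α^𝒢 X, [w,v] = Σ_{z∈X}(w v_z)δ_z, the sextuple [A #_α^𝒢 X, V^x, ^xV, A^{𝒢_x}, [ , ], ( , )] is a Morita context; in particular ( , ) is a morphism of A^{𝒢_x}-bimodules, [ , ] is a morphism of A#_α^𝒢X-bimodules, and the associativity conditions a·[b,c] = (a,b)c and [a,b]·c = a(b,c) hold. -/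

import Mathlib

open scoped Classical

noncomputable section

universe u v w

/-- A groupoid, presented as a set of morphisms with partially defined
composition.  `s g` is the domain (source) identity `d(g)`, `t g` the range
(target) identity `r(g)`; `mul g h` is the composite `gh`, meaningful when
`s g = t h`. -/
structure Gpd (G : Type u) where
  s : G → G
  t : G → G
  inv : G → G
  mul : G → G → G
  s_s : ∀ g, s (s g) = s g
  t_s : ∀ g, t (s g) = s g
  s_t : ∀ g, s (t g) = t g
  t_t : ∀ g, t (t g) = t g
  s_mul : ∀ g h, s g = t h → s (mul g h) = s h
  t_mul : ∀ g h, s g = t h → t (mul g h) = t g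
  mul_assoc : ∀ g h l, s g = t h → s h = t l → mul (mul g h) l = mul g (mul h l)
  mul_src : ∀ g, mul g (s g) = g
  tgt_mul : ∀ g, mul (t g) g = g
  s_inv : ∀ g, s (inv g) = t g
  t_inv : ∀ g, t (inv g) = s g
  inv_mul : ∀ g, mul (inv g) g = s g
  mul_inv : ∀ g, mul g (inv g) = t g

namespace Gpd

variable {G : Type u}

/-- `e` is an object (identity) of the groupoid. -/
def obj (𝒢 : Gpd G) (e : G) : Prop := 𝒢.s e = e

/-- The set `𝒢₀` of objects of the groupoid. -/
def Objs (𝒢 : Gpd G) : Set G := {e | 𝒢.obj e}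

end Gpd

/-- An action `α = (X_g, α_g)` of a groupoid `𝒢` on a set `X`:
`car g` is the subset `X_g` and `act g` restricts to the bijection
`α_g : X_{g⁻¹} → X_g`. -/
structure GpdSetAction {G : Type u} (𝒢 : Gpd G) (X : Type v) where
  car : G → Set X
  act : G → X → X
  car_t : ∀ g, car g = car (𝒢.t g)
  bijOn : ∀ g, Set.BijOn (act g) (car (𝒢.inv g)) (car g)
  act_id : ∀ e, 𝒢.obj e → ∀ x ∈ car e, act e x = x
  act_mul : ∀ g h, 𝒢.s g = 𝒢.t h → ∀ x ∈ car (𝒢.inv h),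
    act g (act h x) = act (𝒢.mul g h) x

/-- `X` is a split `𝒢`-set: `X` is the disjoint union of the `X_e`, `e ∈ 𝒢₀`. -/
def GpdSetAction.Split {G : Type u} {𝒢 : Gpd G} {X : Type v} (α : GpdSetAction 𝒢 X) : Prop :=
  ∀ x : X, ∃! e : G, 𝒢.obj e ∧ x ∈ α.car e

/-- The action is fully faithful: if `α_g` fixes some `x ∈ X_g ∩ X_{g⁻¹}`
then `g` is an identity. -/
def GpdSetAction.FullyFaithful {G : Type u} {𝒢 : Gpd G} {X : Type v}
    (α : GpdSetAction 𝒢 X) : Prop :=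
  ∀ g x, x ∈ α.car g ∩ α.car (𝒢.inv g) → α.act g x = x → 𝒢.obj g

/-- A `𝒢`-grading of the `k`-algebra `A`:  `A = ⊕_{g ∈ 𝒢} A_g` with
`A_g A_h ⊆ A_{gh}` for composable `g, h` and `A_g A_h = 0` otherwise. -/
structure GpdGrading {G : Type u} (𝒢 : Gpd G) (k : Type v) (A : Type w)
    [Field k] [Ring A] [Algebra k A] where
  comp : G → Submodule k A
  internal : DirectSum.IsInternal comp
  mul_mem : ∀ g h, 𝒢.s g = 𝒢.t h → ∀ a ∈ comp g, ∀ b ∈ comp h, a * b ∈ comp (𝒢.mul g h)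
  mul_eq_zero : ∀ g h, 𝒢.s g ≠ 𝒢.t h → ∀ a ∈ comp g, ∀ b ∈ comp h, a * b = 0

/-- The homogeneous component of degree `g` of `a ∈ A`. -/
noncomputable def GpdGrading.proj {G : Type u} {𝒢 : Gpd G} {k : Type v} {A : Type w}
    [Field k] [Ring A] [Algebra k A] (𝒜 : GpdGrading 𝒢 k A) (g : G) (a : A) : A :=
  ((Equiv.ofBijective _ 𝒜.internal).symm a g : A)

/-- `one : G → A` is a family of local units for the grading: each `one e`
(`e ∈ 𝒢₀`) is an identity element of `A_e` and `1_A = Σ_{e ∈ 𝒢₀} 1_e`. -/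
def IsIdFamily {G : Type u} {𝒢 : Gpd G} {k : Type v} {A : Type w}
    [Field k] [Ring A] [Algebra k A] (𝒜 : GpdGrading 𝒢 k A) (one : G → A) : Prop :=
  (∀ e, 𝒢.obj e → one e ∈ 𝒜.comp e ∧ ∀ a ∈ 𝒜.comp e, one e * a = a ∧ a * one e = a) ∧
  (1 : A) = ∑ᶠ e ∈ 𝒢.Objs, one e

/-- The multiplication of the smash product `A #_α^𝒢 X`, defined on the
ambient space of formal sums `Σ a_{(g,x)} δ_{(g,x)}`:
`(a δ_{(g,x)}) (b δ_{(h,y)}) = (a b) δ_{(gh, y)}` when `d(g) = r(h)` and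
`α_h(y) = x`, and `0` otherwise. -/
noncomputable def smashMul {G : Type u} {𝒢 : Gpd G} {X : Type v} {A : Type w} [Ring A]
    (α : GpdSetAction 𝒢 X) (f₁ f₂ : (G × X) →₀ A) : (G × X) →₀ A :=
  f₁.sum fun p a => f₂.sum fun q b =>
    if 𝒢.s p.1 = 𝒢.t q.1 ∧ α.act q.1 q.2 = p.2
    then Finsupp.single (𝒢.mul p.1 q.1, q.2) (a * b) else 0

/-- The underlying set of the smash product `A #_α^𝒢 X = ⊕_{g} ⊕_{x ∈ X_{d(g)}} A_g δ_x`: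
those formal sums whose `(g,x)`-coefficient lies in `A_g`, supported on pairs
with `x ∈ X_{d(g)}`. -/
def smashSet {G : Type u} {𝒢 : Gpd G} {X : Type v} {k : Type*} {A : Type w}
    [Field k] [Ring A] [Algebra k A]
    (α : GpdSetAction 𝒢 X) (𝒜 : GpdGrading 𝒢 k A) : Set ((G × X) →₀ A) :=
  {f | ∀ p : G × X, f p ∈ 𝒜.comp p.1 ∧ (f p ≠ 0 → p.2 ∈ α.car (𝒢.s p.1))}

/-- The identity element `Σ_{e ∈ 𝒢₀} Σ_{x ∈ X_e} 1_e δ_x` of the smash product. -/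
noncomputable def smashOne {G : Type u} {𝒢 : Gpd G} {X : Type v} {A : Type w} [Ring A]
    (α : GpdSetAction 𝒢 X) (one : G → A) : (G × X) →₀ A :=
  ∑ᶠ e ∈ 𝒢.Objs, ∑ᶠ x ∈ α.car e, Finsupp.single ((e, x) : G × X) (one e)

/-- The `x`-stabilizer `𝒢_x = {g ∈ 𝒢_e : α_g(x) = x}` (where `x ∈ X_e`). -/
def stabilizer {G : Type u} {𝒢 : Gpd G} {X : Type v} (α : GpdSetAction 𝒢 X)
    (x : X) : Set G :=
  {g | 𝒢.s g = 𝒢.t g ∧ x ∈ α.car (𝒢.s g) ∧ α.act g x = x}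

/-- `A^{𝒢_x} = ⊕_{g ∈ 𝒢_x} A_g`, the graded subalgebra supported on the
stabilizer of `x`. -/
def stabSubalg {G : Type u} {𝒢 : Gpd G} {X : Type v} {k : Type*} {A : Type w}
    [Field k] [Ring A] [Algebra k A]
    (α : GpdSetAction 𝒢 X) (𝒜 : GpdGrading 𝒢 k A) (x : X) : Set A :=
  {a | ∀ g, 𝒜.proj g a ≠ 0 → g ∈ stabilizer α x}

/-- `^xV = ⊕_{y ∈ X} V_{x,y} = ⊕_{h : d(h) = e} A_h` (where `x ∈ X_e`). -/
def xVset {G : Type u} {𝒢 : Gpd G} {X : Type v} {k : Type*} {A : Type w}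
    [Field k] [Ring A] [Algebra k A]
    (α : GpdSetAction 𝒢 X) (𝒜 : GpdGrading 𝒢 k A) (x : X) : Set A :=
  {a | ∀ h, 𝒜.proj h a ≠ 0 → x ∈ α.car (𝒢.s h)}

/-- `V^x = ⊕_{y ∈ X} V_{y,x} = ⊕_{h : α_h(y) = x for some y ∈ X_{d(h)}} A_h`. -/
def Vxset {G : Type u} {𝒢 : Gpd G} {X : Type v} {k : Type*} {A : Type w}
    [Field k] [Ring A] [Algebra k A]
    (α : GpdSetAction 𝒢 X) (𝒜 : GpdGrading 𝒢 k A) (x : X) : Set A :=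
  {a | ∀ h, 𝒜.proj h a ≠ 0 → ∃ y ∈ α.car (𝒢.s h), α.act h y = x}

/-- The `y`-component `w_y ∈ V_{x,y}` of `w ∈ ^xV` with respect to the
grading `^xV = ⊕_{y ∈ X} V_{x,y}`. -/
noncomputable def xVcomp {G : Type u} {𝒢 : Gpd G} {X : Type v} {k : Type*} {A : Type w}
    [Field k] [Ring A] [Algebra k A]
    (α : GpdSetAction 𝒢 X) (𝒜 : GpdGrading 𝒢 k A) (x : X) (w : A) (y : X) : A :=
  ∑ᶠ h ∈ {h | x ∈ α.car (𝒢.s h) ∧ α.act h x = y}, 𝒜.proj h w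

/-- The `z`-component `v_z ∈ V_{z,x}` of `v ∈ V^x` with respect to the
grading `V^x = ⊕_{z ∈ X} V_{z,x}`. -/
noncomputable def Vxcomp {G : Type u} {𝒢 : Gpd G} {X : Type v} {k : Type*} {A : Type w}
    [Field k] [Ring A] [Algebra k A]
    (α : GpdSetAction 𝒢 X) (𝒜 : GpdGrading 𝒢 k A) (x : X) (v : A) (z : X) : A :=
  ∑ᶠ h ∈ {h | z ∈ α.car (𝒢.s h) ∧ α.act h z = x}, 𝒜.proj h v

/-- The left action of `A #_α^𝒢 X` on `^xV`: `(a_g δ_y) · w = a_g w_y`. -/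
noncomputable def lSmashAct {G : Type u} {𝒢 : Gpd G} {X : Type v} {k : Type*} {A : Type w}
    [Field k] [Ring A] [Algebra k A]
    (α : GpdSetAction 𝒢 X) (𝒜 : GpdGrading 𝒢 k A) (x : X)
    (f : (G × X) →₀ A) (w : A) : A :=
  f.sum fun p a => a * xVcomp α 𝒜 x w p.2

/-- The right action of `A #_α^𝒢 X` on `V^x`: `v · (a_g δ_y) = (v a_g)_y`. -/
noncomputable def rSmashAct {G : Type u} {𝒢 : Gpd G} {X : Type v} {k : Type*} {A : Type w}
    [Field k] [Ring A] [Algebra k A]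
    (α : GpdSetAction 𝒢 X) (𝒜 : GpdGrading 𝒢 k A) (x : X)
    (v : A) (f : (G × X) →₀ A) : A :=
  f.sum fun p a => Vxcomp α 𝒜 x (v * a) p.2

/-- The Morita pairing `( , ) : V^x ⊗_{A #_α^𝒢 X} {^xV} → A^{𝒢_x}`,
`(v, w) = Σ_{g ∈ 𝒢_x} (vw)_g`. -/
noncomputable def moritaPair {G : Type u} {𝒢 : Gpd G} {X : Type v} {k : Type*} {A : Type w}
    [Field k] [Ring A] [Algebra k A]
    (α : GpdSetAction 𝒢 X) (𝒜 : GpdGrading 𝒢 k A) (x : X) (v w : A) : A :=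
  ∑ᶠ g ∈ stabilizer α x, 𝒜.proj g (v * w)

/-- The Morita pairing `[ , ] : {^xV} ⊗_{A^{𝒢_x}} V^x → A #_α^𝒢 X`,
`[w, v] = Σ_{z ∈ X} (w v_z) δ_z`. -/
noncomputable def moritaBrack {G : Type u} {𝒢 : Gpd G} {X : Type v} {k : Type*} {A : Type w}
    [Field k] [Ring A] [Algebra k A]
    (α : GpdSetAction 𝒢 X) (𝒜 : GpdGrading 𝒢 k A) (x : X) (w v : A) : (G × X) →₀ A :=
  ∑ᶠ z : X, ∑ᶠ g : G,
    Finsupp.single ((g, z) : G × X) (𝒜.proj g (w * Vxcomp α 𝒜 x v z))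

/-!
Every map in sight is additive in each argument, and `^xV`, `V^x`, `A^{𝒢_x}` and
`A #_α^𝒢 X` are spanned by homogeneous elements, so each identity reduces to homogeneous
`a ∈ A_g`, `b ∈ A_h`, … . There both sides are the same product, each guarded by a condition
on the degrees (`if P then a * b * c else 0`). If the product vanishes there is nothing to
prove; otherwise the degrees are composable, and the two guards agree by the axioms of the
action. For the associativity conditions the guards are "`α_g` fixes `x`" and "`g ∈ 𝒢_x`";
these agree because `X` is split: if `α_g(x) = x` then `x ∈ X_{d(g)} ∩ X_{r(g)}`, forcing
`d(g) = r(g)`.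
-/

theorem finsum_finsum_single_apply {G : Type u} {X : Type v} {A : Type w} [Ring A] [Finite X]
    (c : X → G → A) (hc : ∀ z, (Function.support (c z)).Finite) (p : G × X) :
    (∑ᶠ z : X, ∑ᶠ g : G, Finsupp.single ((g, z) : G × X) (c z g)) p = c p.2 p.1 := by
  have hsupp (z : X) :
      (Function.support fun g => Finsupp.single ((g, z) : G × X) (c z g)).Finite :=
    (hc z).subset fun g hg => by simpa using hg
  rw [← Finsupp.applyAddHom_apply, map_finsum _ (Set.toFinite _),
    finsum_eq_single _ p.2 fun z hz => ?_, map_finsum _ (hsupp _),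
    finsum_eq_single _ p.1 fun g hg => ?_]
  · simp
  · simp [Prod.ext_iff, Ne.symm hg]
  · rw [map_finsum _ (hsupp _)]
    simp [Prod.ext_iff, Ne.symm hz]

theorem ite_eq_ite_of_ne_zero {M : Type*} [Zero M] {P Q : Prop} [Decidable P] [Decidable Q]
    {p : M} (h : p ≠ 0 → (P ↔ Q)) : (if P then p else 0) = if Q then p else 0 := by
  by_cases hp : p = 0
  · simp [hp]
  · simp only [h hp]

namespace GpdGrading

variable {G : Type u} {𝒢 : Gpd G} {k : Type*} {A : Type w} [Field k] [Ring A] [Algebra k A]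
  (𝒜 : GpdGrading 𝒢 k A)

instance : DirectSum.Decomposition 𝒜.comp := 𝒜.internal.chooseDecomposition

theorem proj_eq_decompose (g : G) (a : A) :
    𝒜.proj g a = DirectSum.decompose 𝒜.comp a g := rfl

theorem proj_add (g : G) (a b : A) : 𝒜.proj g (a + b) = 𝒜.proj g a + 𝒜.proj g b := by
  simp only [proj_eq_decompose, DirectSum.decompose_add, DirectSum.add_apply,
    Submodule.coe_add]

theorem proj_mem (g : G) (a : A) : 𝒜.proj g a ∈ 𝒜.comp g :=
  (DirectSum.decompose 𝒜.comp a g).2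

theorem proj_of_mem {g : G} {a : A} (ha : a ∈ 𝒜.comp g) (h : G) :
    𝒜.proj h a = if h = g then a else 0 := by
  split_ifs with hhg
  · subst hhg
    exact DirectSum.decompose_of_mem_same _ ha
  · exact DirectSum.decompose_of_mem_ne _ ha (Ne.symm hhg)

theorem proj_support_finite (a : A) : (Function.support fun g => 𝒜.proj g a).Finite := by
  classical
  refine (DirectSum.decompose 𝒜.comp a).support.finite_toSet.subset fun g hg => ?_
  simpa [proj_eq_decompose] using hg

theorem mul_mem_mul {g h : G} {a b : A} (ha : a ∈ 𝒜.comp g) (hb : b ∈ 𝒜.comp h) :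
    a * b ∈ 𝒜.comp (𝒢.mul g h) := by
  by_cases hgh : 𝒢.s g = 𝒢.t h
  · exact 𝒜.mul_mem g h hgh a ha b hb
  · rw [𝒜.mul_eq_zero g h hgh a ha b hb]
    exact zero_mem _

theorem composable_of_mul_ne_zero {g h : G} {a b : A} (ha : a ∈ 𝒜.comp g)
    (hb : b ∈ 𝒜.comp h) (hab : a * b ≠ 0) : 𝒢.s g = 𝒢.t h := by
  by_contra hgh
  exact hab (𝒜.mul_eq_zero g h hgh a ha b hb)

/-- `⊕_{g ∈ T} A_g`. -/
def supported (T : Set G) : AddSubmonoid A where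
  carrier := {a | ∀ g, 𝒜.proj g a ≠ 0 → g ∈ T}
  zero_mem' g h0 := absurd (by simp [proj_eq_decompose]) h0
  add_mem' {a b} ha hb g hab := by
    rw [proj_add] at hab
    by_cases hag : 𝒜.proj g a = 0
    · exact hb g (by simpa [hag] using hab)
    · exact ha g hag

variable {𝒜}

theorem mem_supported_of_mem {T : Set G} {g : G} (hg : g ∈ T) {a : A} (ha : a ∈ 𝒜.comp g) :
    a ∈ 𝒜.supported T := fun h hh => by
  rw [𝒜.proj_of_mem ha] at hh
  split_ifs at hh with hhg
  · exact hhg ▸ hg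
  · exact absurd rfl hh

theorem supported_mono {S T : Set G} (hST : S ⊆ T) : 𝒜.supported S ≤ 𝒜.supported T :=
  fun _ ha g hg => hST (ha g hg)

@[elab_as_elim]
theorem supported_induction {T : Set G} {motive : (a : A) → a ∈ 𝒜.supported T → Prop}
    (zero : motive 0 (zero_mem _))
    (add : ∀ a b ha hb, motive a ha → motive b hb → motive (a + b) (add_mem ha hb))
    (homogeneous : ∀ g (hg : g ∈ T) a (ha : a ∈ 𝒜.comp g), motive a (mem_supported_of_mem hg ha))
    {u : A} (hu : u ∈ 𝒜.supported T) : motive u hu := by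
  classical
  suffices ∃ hu', motive u hu' from this.elim fun _ h => h
  rw [← DirectSum.sum_support_decompose 𝒜.comp u]
  refine Finset.sum_induction _ (fun a => ∃ ha, motive a ha)
    (fun a b ⟨ha, hma⟩ ⟨hb, hmb⟩ => ⟨_, add a b ha hb hma hmb⟩) ⟨_, zero⟩ fun g hg => ?_
  exact ⟨_, homogeneous g (hu g (by simpa [proj_eq_decompose] using hg)) _ (𝒜.proj_mem g u)⟩

theorem eq_of_mem_supported {B : Type*} [AddGroup B] {T : Set G} {F₁ F₂ : A → B}
    (hF₁ : ∀ a b, F₁ (a + b) = F₁ a + F₁ b) (hF₂ : ∀ a b, F₂ (a + b) = F₂ a + F₂ b)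
    (homogeneous : ∀ g ∈ T, ∀ a ∈ 𝒜.comp g, F₁ a = F₂ a) {u : A}
    (hu : u ∈ 𝒜.supported T) : F₁ u = F₂ u :=
  supported_induction (motive := fun u _ => F₁ u = F₂ u)
    ((AddMonoidHom.mk' F₁ hF₁).map_zero.trans (AddMonoidHom.mk' F₂ hF₂).map_zero.symm)
    (fun a b _ _ ha hb => by rw [hF₁, hF₂, ha, hb]) homogeneous hu

variable (𝒜) in
theorem eq_of_homogeneous {B : Type*} [AddGroup B] {F₁ F₂ : A → B}
    (hF₁ : ∀ a b, F₁ (a + b) = F₁ a + F₁ b) (hF₂ : ∀ a b, F₂ (a + b) = F₂ a + F₂ b)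
    (homogeneous : ∀ g, ∀ a ∈ 𝒜.comp g, F₁ a = F₂ a) (u : A) : F₁ u = F₂ u :=
  eq_of_mem_supported (T := Set.univ) hF₁ hF₂ (fun g _ => homogeneous g) fun _ _ => trivial

theorem mul_mem_supported {S T U : Set G}
    (hU : ∀ g ∈ S, ∀ h ∈ T, 𝒢.s g = 𝒢.t h → 𝒢.mul g h ∈ U) {a b : A}
    (ha : a ∈ 𝒜.supported S) (hb : b ∈ 𝒜.supported T) : a * b ∈ 𝒜.supported U := by
  induction ha using supported_induction with
  | zero => simp
  | add a a' _ _ ha ha' => simpa [add_mul] using add_mem ha ha'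
  | homogeneous g hg a ha =>
    induction hb using supported_induction with
    | zero => simp
    | add b b' _ _ hb hb' => simpa [mul_add] using add_mem hb hb'
    | homogeneous h hh b hb =>
      by_cases hgh : 𝒢.s g = 𝒢.t h
      · exact mem_supported_of_mem (hU g hg h hh hgh) (𝒜.mul_mem_mul ha hb)
      · simp [𝒜.mul_eq_zero g h hgh a ha b hb]

variable (𝒜)

/-- The projection of `A` onto `⊕_{g ∈ T} A_g`. -/
def restrict (T : Set G) : A →+ A where
  toFun a := ∑ᶠ g ∈ T, 𝒜.proj g a
  map_zero' := by simp [proj_eq_decompose]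
  map_add' a b := by
    simp only [proj_add]
    exact finsum_mem_add_distrib' ((𝒜.proj_support_finite a).inter_of_right T)
      ((𝒜.proj_support_finite b).inter_of_right T)

variable {𝒜}

theorem restrict_of_mem {T : Set G} {g : G} {a : A} (ha : a ∈ 𝒜.comp g) :
    𝒜.restrict T a = if g ∈ T then a else 0 := by
  change ∑ᶠ h ∈ T, 𝒜.proj h a = _
  simp only [𝒜.proj_of_mem ha]
  rw [finsum_eq_single _ g fun h hhg => by simp [hhg]]
  simp [finsum_eq_if]

theorem restrict_mem_supported (T : Set G) (a : A) : 𝒜.restrict T a ∈ 𝒜.supported T := by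
  induction a using DirectSum.Decomposition.inductionOn 𝒜.comp with
  | zero => simp
  | add a b ha hb => simpa using add_mem ha hb
  | homogeneous a =>
    rw [restrict_of_mem a.2]
    split_ifs with hg
    · exact mem_supported_of_mem hg a.2
    · exact zero_mem _

theorem restrict_mul_left {S S' T U : Set G}
    (hS : ∀ g ∈ U, ∀ m ∈ T, 𝒢.s g = 𝒢.t m → (𝒢.mul g m ∈ S ↔ m ∈ S')) {a u : A}
    (ha : a ∈ 𝒜.supported U) (hu : u ∈ 𝒜.supported T) :
    𝒜.restrict S (a * u) = a * 𝒜.restrict S' u := by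
  induction ha using supported_induction with
  | zero => simp
  | add a a' _ _ h h' => rw [add_mul, map_add, h, h', add_mul]
  | homogeneous g hg a ha =>
    induction hu using supported_induction with
    | zero => simp
    | add u u' _ _ h h' => rw [mul_add, map_add, h, h', map_add, mul_add]
    | homogeneous m hm u hu =>
      rw [restrict_of_mem (𝒜.mul_mem_mul ha hu), restrict_of_mem hu, mul_ite, mul_zero]
      exact ite_eq_ite_of_ne_zero fun hau =>
        hS g hg m hm (𝒜.composable_of_mul_ne_zero ha hu hau)

theorem restrict_mul_right {S S' T U : Set G}
    (hS : ∀ m ∈ T, ∀ g ∈ U, 𝒢.s m = 𝒢.t g → (𝒢.mul m g ∈ S ↔ m ∈ S')) {u a : A}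
    (hu : u ∈ 𝒜.supported T) (ha : a ∈ 𝒜.supported U) :
    𝒜.restrict S (u * a) = 𝒜.restrict S' u * a := by
  induction ha using supported_induction with
  | zero => simp
  | add a a' _ _ h h' => rw [mul_add, map_add, h, h', mul_add]
  | homogeneous g hg a ha =>
    induction hu using supported_induction with
    | zero => simp
    | add u u' _ _ h h' => rw [add_mul, map_add, h, h', map_add, add_mul]
    | homogeneous m hm u hu =>
      rw [restrict_of_mem (𝒜.mul_mem_mul hu ha), restrict_of_mem hu, ite_mul, zero_mul]
      exact ite_eq_ite_of_ne_zero fun hua =>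
        hS m hm g hg (𝒜.composable_of_mul_ne_zero hu ha hua)

end GpdGrading

namespace GpdSetAction

variable {G : Type u} {𝒢 : Gpd G} {X : Type v} (α : GpdSetAction 𝒢 X)

theorem car_inv (g : G) : α.car (𝒢.inv g) = α.car (𝒢.s g) := by
  rw [α.car_t, 𝒢.t_inv]

theorem act_mem {g : G} {y : X} (hy : y ∈ α.car (𝒢.s g)) : α.act g y ∈ α.car (𝒢.t g) := by
  rw [← α.car_t]
  exact (α.bijOn g).mapsTo (by rwa [car_inv])

theorem act_injOn (g : G) : Set.InjOn (α.act g) (α.car (𝒢.s g)) := by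
  rw [← car_inv]
  exact (α.bijOn g).injOn

theorem act_act {g h : G} (hgh : 𝒢.s g = 𝒢.t h) {y : X} (hy : y ∈ α.car (𝒢.s h)) :
    α.act g (α.act h y) = α.act (𝒢.mul g h) y :=
  α.act_mul g h hgh y (by rwa [car_inv])

/-- The arrows `h` with `α_h(y) = z`: the degrees of `V_{y,z}`. -/
def transporters (y z : X) : Set G := {h | y ∈ α.car (𝒢.s h) ∧ α.act h y = z}

variable {α}

theorem eq_of_mem_transporters {h : G} {y y' z : X} (hy : h ∈ α.transporters y z)
    (hy' : h ∈ α.transporters y' z) : y = y' :=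
  α.act_injOn h hy.1 hy'.1 (hy.2.trans hy'.2.symm)

theorem mem_stabilizer_iff_of_split (hsplit : α.Split) {g : G} {x : X}
    (hx : x ∈ α.car (𝒢.s g)) : g ∈ stabilizer α x ↔ α.act g x = x := by
  refine ⟨fun hg => hg.2.2, fun hgx => ⟨?_, hx, hgx⟩⟩
  have hx' : x ∈ α.car (𝒢.t g) := hgx ▸ α.act_mem hx
  exact (hsplit x).unique ⟨𝒢.s_s g, hx⟩ ⟨𝒢.s_t g, hx'⟩

theorem act_eq_iff_of_mem_transporters {m : G} {x z u : X} (hm : m ∈ α.transporters z x)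
    (hu : u ∈ α.car (𝒢.s m)) : α.act m u = x ↔ u = z :=
  ⟨fun h => α.act_injOn m hu hm.1 (h.trans hm.2.symm), fun h => h ▸ hm.2⟩

theorem mem_transporters_iff_of_mul_mem_stabilizer {h n : G} {x y : X}
    (hhn : 𝒢.s h = 𝒢.t n) (hl : 𝒢.mul h n ∈ stabilizer α x) :
    h ∈ α.transporters y x ↔ n ∈ α.transporters x y := by
  obtain ⟨-, hx, hlx⟩ := hl
  rw [𝒢.s_mul h n hhn] at hx
  have hnx : α.act n x ∈ α.car (𝒢.s h) := hhn ▸ α.act_mem hx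
  have hhnx : α.act h (α.act n x) = x := by rw [α.act_act hhn hx, hlx]
  constructor
  · intro hh
    exact ⟨hx, (act_eq_iff_of_mem_transporters hh hnx).1 hhnx⟩
  · rintro ⟨-, rfl⟩
    exact ⟨hnx, hhnx⟩

theorem mem_transporters_iff_act_mul_eq {n m : G} {x y z : X} (hnm : 𝒢.s n = 𝒢.t m)
    (hm : m ∈ α.transporters z x) : n ∈ α.transporters x y ↔ α.act (𝒢.mul n m) z = y := by
  rw [← α.act_act hnm hm.1, hm.2]
  exact and_iff_right (hnm ▸ hm.2 ▸ α.act_mem hm.1)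

theorem mul_mem_transporters_iff_act_eq {m g : G} {x y z : X} (hmg : 𝒢.s m = 𝒢.t g)
    (hy : y ∈ α.car (𝒢.s g)) (hm : m ∈ α.transporters z x) :
    𝒢.mul m g ∈ α.transporters y x ↔ α.act g y = z := by
  have hgy : α.act g y ∈ α.car (𝒢.s m) := hmg ▸ α.act_mem hy
  rw [← act_eq_iff_of_mem_transporters hm hgy, α.act_act hmg hy]
  exact and_iff_right (by rwa [𝒢.s_mul m g hmg])

theorem mul_mem_transporters_iff_mem_stabilizer (hsplit : α.Split) {h m : G} {x z : X}
    (hhm : 𝒢.s h = 𝒢.t m) (hx : x ∈ α.car (𝒢.s h)) (hm : m ∈ α.transporters z x) :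
    𝒢.mul h m ∈ α.transporters z x ↔ h ∈ stabilizer α x := by
  rw [mem_stabilizer_iff_of_split hsplit hx, transporters, Set.mem_ofPred_eq,
    ← α.act_act hhm hm.1, hm.2]
  exact and_iff_right (by rw [𝒢.s_mul h m hhm]; exact hm.1)

theorem mem_transporters_iff_mul_mem_stabilizer (hsplit : α.Split) {m n : G} {x z : X}
    (hmn : 𝒢.s m = 𝒢.t n) (hx : x ∈ α.car (𝒢.s n)) (hm : m ∈ α.transporters z x) :
    n ∈ α.transporters x z ↔ 𝒢.mul m n ∈ stabilizer α x := by
  rw [mem_stabilizer_iff_of_split hsplit (by rwa [𝒢.s_mul m n hmn]), ← α.act_act hmn hx,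
    act_eq_iff_of_mem_transporters hm (hmn ▸ α.act_mem hx)]
  exact and_iff_right hx

theorem mul_mem_transporters_iff_of_mem_stabilizer {g m : G} {x z : X} (hg : g ∈ stabilizer α x)
    (hgm : 𝒢.s g = 𝒢.t m) : 𝒢.mul g m ∈ α.transporters z x ↔ m ∈ α.transporters z x := by
  obtain ⟨-, hx, hgx⟩ := hg
  rw [transporters, Set.mem_ofPred_eq, Set.mem_ofPred_eq, 𝒢.s_mul g m hgm]
  refine and_congr_right fun hz => ?_
  rw [← α.act_act hgm hz]
  have hmz : α.act m z ∈ α.car (𝒢.s g) := hgm ▸ α.act_mem hz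
  exact ⟨fun h => α.act_injOn g hmz hx (h.trans hgx.symm), fun h => h ▸ hgx⟩

theorem mul_mem_stabilizer_iff_left {g m : G} {x : X} (hg : g ∈ stabilizer α x)
    (hm : x ∈ α.car (𝒢.s m)) (hgm : 𝒢.s g = 𝒢.t m) :
    𝒢.mul g m ∈ stabilizer α x ↔ m ∈ stabilizer α x := by
  have key := mul_mem_transporters_iff_of_mem_stabilizer (z := x) hg hgm
  refine ⟨fun h => ⟨?_, hm, (key.1 ⟨h.2.1, h.2.2⟩).2⟩,
    fun h => ⟨?_, (key.2 ⟨hm, h.2.2⟩).1, (key.2 ⟨hm, h.2.2⟩).2⟩⟩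
  · rw [← hgm, hg.1, ← 𝒢.t_mul g m hgm, ← h.1, 𝒢.s_mul g m hgm]
  · rw [𝒢.s_mul g m hgm, 𝒢.t_mul g m hgm, h.1, ← hgm, hg.1]

theorem mul_mem_stabilizer_iff_right {g m : G} {x : X} (hg : g ∈ stabilizer α x)
    (hmg : 𝒢.s m = 𝒢.t g) :
    𝒢.mul m g ∈ stabilizer α x ↔ m ∈ stabilizer α x := by
  obtain ⟨hg₁, hx, hgx⟩ := hg
  rw [stabilizer, Set.mem_ofPred_eq, Set.mem_ofPred_eq, 𝒢.s_mul m g hmg, 𝒢.t_mul m g hmg,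
    ← α.act_act hmg hx, hgx, hmg, ← hg₁]

end GpdSetAction

section MoritaContext

open GpdGrading GpdSetAction

variable {G : Type u} {𝒢 : Gpd G} {X : Type v} {k : Type*} {A : Type w}
  [Field k] [Ring A] [Algebra k A] {𝒜 : GpdGrading 𝒢 k A} {α : GpdSetAction 𝒢 X} {x : X}

theorem Vxcomp_eq_restrict (v : A) (z : X) :
    Vxcomp α 𝒜 x v z = 𝒜.restrict (α.transporters z x) v := rfl

theorem xVcomp_eq_restrict (w : A) (y : X) :
    xVcomp α 𝒜 x w y = 𝒜.restrict (α.transporters x y) w := rfl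

theorem moritaPair_eq_restrict (v w : A) :
    moritaPair α 𝒜 x v w = 𝒜.restrict (stabilizer α x) (v * w) := rfl

theorem Vxcomp_add (v v' : A) (z : X) :
    Vxcomp α 𝒜 x (v + v') z = Vxcomp α 𝒜 x v z + Vxcomp α 𝒜 x v' z :=
  map_add (𝒜.restrict _) v v'

theorem xVcomp_add (w w' : A) (y : X) :
    xVcomp α 𝒜 x (w + w') y = xVcomp α 𝒜 x w y + xVcomp α 𝒜 x w' y :=
  map_add (𝒜.restrict _) w w'

theorem mem_xVset_iff {w : A} :
    w ∈ xVset α 𝒜 x ↔ w ∈ 𝒜.supported {h | x ∈ α.car (𝒢.s h)} := Iff.rfl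

theorem mem_Vxset_iff {v : A} :
    v ∈ Vxset α 𝒜 x ↔ v ∈ 𝒜.supported {h | ∃ y, h ∈ α.transporters y x} := Iff.rfl

theorem mul_mem_xVset (a : A) {w : A} (hw : w ∈ xVset α 𝒜 x) : a * w ∈ xVset α 𝒜 x :=
  mul_mem_supported (S := Set.univ) (U := {h | x ∈ α.car (𝒢.s h)})
    (fun g _ h hh hgh => show x ∈ α.car (𝒢.s (𝒢.mul g h)) by rwa [𝒢.s_mul g h hgh])
    (fun _ _ => trivial) (mem_xVset_iff.1 hw)

theorem mul_mem_xVset_of_mem_stabSubalg {w a : A} (hw : w ∈ xVset α 𝒜 x)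
    (ha : a ∈ stabSubalg α 𝒜 x) : w * a ∈ xVset α 𝒜 x :=
  mul_mem_supported (T := stabilizer α x) (U := {h | x ∈ α.car (𝒢.s h)})
    (fun h _ g hg hhg => show x ∈ α.car (𝒢.s (𝒢.mul h g)) by rw [𝒢.s_mul h g hhg]; exact hg.2.1)
    (mem_xVset_iff.1 hw) ha

theorem mul_mem_Vxset_of_mem_stabSubalg {a v : A} (ha : a ∈ stabSubalg α 𝒜 x)
    (hv : v ∈ Vxset α 𝒜 x) : a * v ∈ Vxset α 𝒜 x := by
  refine mem_Vxset_iff.2 (mul_mem_supported (S := stabilizer α x) ?_ ha (mem_Vxset_iff.1 hv))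
  rintro g hg h ⟨y, hy, hyx⟩ hgh
  exact ⟨y, by rwa [𝒢.s_mul g h hgh], by rw [← α.act_act hgh hy, hyx, hg.2.2]⟩

theorem xVcomp_mem_xVset (w : A) (y : X) : xVcomp α 𝒜 x w y ∈ xVset α 𝒜 x :=
  supported_mono (fun _ hh => hh.1) (restrict_mem_supported _ w)

theorem Vxcomp_mem_Vxset (v : A) (z : X) : Vxcomp α 𝒜 x v z ∈ Vxset α 𝒜 x := by
  refine mem_Vxset_iff.2 (supported_mono (fun h hh => ?_) (restrict_mem_supported _ v))
  exact ⟨z, hh⟩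

theorem lSmashAct_mem_xVset (f : (G × X) →₀ A) (w : A) : lSmashAct α 𝒜 x f w ∈ xVset α 𝒜 x :=
  AddSubmonoidClass.finsuppSum_mem (𝒜.supported _) f _
    fun p _ => mul_mem_xVset _ (xVcomp_mem_xVset w p.2)

theorem rSmashAct_mem_Vxset (v : A) (f : (G × X) →₀ A) : rSmashAct α 𝒜 x v f ∈ Vxset α 𝒜 x :=
  AddSubmonoidClass.finsuppSum_mem (𝒜.supported _) f _ fun p _ => Vxcomp_mem_Vxset _ p.2

theorem moritaPair_mem_stabSubalg (v w : A) : moritaPair α 𝒜 x v w ∈ stabSubalg α 𝒜 x :=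
  restrict_mem_supported _ _

theorem moritaPair_add_left (v v' w : A) :
    moritaPair α 𝒜 x (v + v') w = moritaPair α 𝒜 x v w + moritaPair α 𝒜 x v' w := by
  simp only [moritaPair_eq_restrict, add_mul, map_add]

theorem moritaPair_add_right (v w w' : A) :
    moritaPair α 𝒜 x v (w + w') = moritaPair α 𝒜 x v w + moritaPair α 𝒜 x v w' := by
  simp only [moritaPair_eq_restrict, mul_add, map_add]

theorem lSmashAct_add_left (f f' : (G × X) →₀ A) (w : A) :
    lSmashAct α 𝒜 x (f + f') w = lSmashAct α 𝒜 x f w + lSmashAct α 𝒜 x f' w :=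
  Finsupp.sum_add_index' (fun _ => zero_mul _) fun _ _ _ => add_mul _ _ _

theorem lSmashAct_add_right (f : (G × X) →₀ A) (w w' : A) :
    lSmashAct α 𝒜 x f (w + w') = lSmashAct α 𝒜 x f w + lSmashAct α 𝒜 x f w' := by
  simp only [lSmashAct, xVcomp_add, mul_add, Finsupp.sum_add]

theorem rSmashAct_add_left (v v' : A) (f : (G × X) →₀ A) :
    rSmashAct α 𝒜 x (v + v') f = rSmashAct α 𝒜 x v f + rSmashAct α 𝒜 x v' f := by
  simp only [rSmashAct, add_mul, Vxcomp_add, Finsupp.sum_add]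

theorem rSmashAct_add_right (v : A) (f f' : (G × X) →₀ A) :
    rSmashAct α 𝒜 x v (f + f') = rSmashAct α 𝒜 x v f + rSmashAct α 𝒜 x v f' :=
  Finsupp.sum_add_index' (fun _ => by simp [Vxcomp_eq_restrict]) fun _ _ _ => by
    rw [mul_add, Vxcomp_add]

theorem smashMul_add_left (f f' F : (G × X) →₀ A) :
    smashMul α (f + f') F = smashMul α f F + smashMul α f' F :=
  Finsupp.sum_add_index' (fun _ => by simp) fun _ _ _ => by
    simp only [add_mul, ← Finsupp.sum_add]
    exact Finsupp.sum_congr fun _ _ => by split_ifs <;> simp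

theorem smashMul_add_right (f F F' : (G × X) →₀ A) :
    smashMul α f (F + F') = smashMul α f F + smashMul α f F' := by
  simp only [smashMul, ← Finsupp.sum_add]
  refine Finsupp.sum_congr fun _ _ => Finsupp.sum_add_index' (fun _ => by simp)
    fun _ _ _ => ?_
  split_ifs <;> simp [mul_add]

theorem lSmashAct_single (p : G × X) (a w : A) :
    lSmashAct α 𝒜 x (Finsupp.single p a) w = a * xVcomp α 𝒜 x w p.2 :=
  Finsupp.sum_single_index (zero_mul _)

theorem rSmashAct_single (v : A) (p : G × X) (a : A) :
    rSmashAct α 𝒜 x v (Finsupp.single p a) = Vxcomp α 𝒜 x (v * a) p.2 :=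
  Finsupp.sum_single_index (by simp [Vxcomp_eq_restrict])

theorem smashMul_single_of_mem {g h : G} {a b : A} (ha : a ∈ 𝒜.comp g) (hb : b ∈ 𝒜.comp h)
    (y z : X) :
    smashMul α (Finsupp.single (g, y) a) (Finsupp.single (h, z) b) =
      if α.act h z = y then Finsupp.single (𝒢.mul g h, z) (a * b) else 0 := by
  rw [smashMul, Finsupp.sum_single_index (by simp), Finsupp.sum_single_index (by simp)]
  by_cases hgh : 𝒢.s g = 𝒢.t h
  · simp [hgh]
  · simp [hgh, 𝒜.mul_eq_zero g h hgh a ha b hb]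

theorem eq_of_mem_smashSet {B : Type*} [AddCommGroup B] {F₁ F₂ : ((G × X) →₀ A) → B}
    (hF₁ : ∀ f f', F₁ (f + f') = F₁ f + F₁ f') (hF₂ : ∀ f f', F₂ (f + f') = F₂ f + F₂ f')
    (single : ∀ g y a, a ∈ 𝒜.comp g → y ∈ α.car (𝒢.s g) →
      F₁ (Finsupp.single (g, y) a) = F₂ (Finsupp.single (g, y) a))
    {f : (G × X) →₀ A} (hf : f ∈ smashSet α 𝒜) : F₁ f = F₂ f := by
  have expand (F : ((G × X) →₀ A) → B) (hF : ∀ f f', F (f + f') = F f + F f') :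
      F f = ∑ p ∈ f.support, F (Finsupp.single p (f p)) := by
    conv_lhs => rw [← f.sum_single]
    exact map_sum (AddMonoidHom.mk' F hF) _ _
  rw [expand F₁ hF₁, expand F₂ hF₂]
  exact Finset.sum_congr rfl fun p hp =>
    single p.1 p.2 (f p) (hf p).1 ((hf p).2 (Finsupp.mem_support_iff.mp hp))

theorem moritaPair_mul_left {a : A} (ha : a ∈ stabSubalg α 𝒜 x) (v : A) {w : A}
    (hw : w ∈ xVset α 𝒜 x) : moritaPair α 𝒜 x (a * v) w = a * moritaPair α 𝒜 x v w := by
  rw [moritaPair_eq_restrict, moritaPair_eq_restrict, mul_assoc]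
  exact restrict_mul_left (fun g hg m hm hgm => mul_mem_stabilizer_iff_left hg hm hgm) ha
    (mul_mem_xVset v hw)

theorem moritaPair_mul_right (v w : A) {a : A} (ha : a ∈ stabSubalg α 𝒜 x) :
    moritaPair α 𝒜 x v (w * a) = moritaPair α 𝒜 x v w * a := by
  rw [moritaPair_eq_restrict, moritaPair_eq_restrict, ← mul_assoc]
  exact restrict_mul_right (T := Set.univ) (fun m _ g hg hmg => mul_mem_stabilizer_iff_right hg hmg)
    (fun _ _ => trivial) ha

theorem Vxcomp_mul_of_mem_stabSubalg {a : A} (ha : a ∈ stabSubalg α 𝒜 x) (v : A) (z : X) :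
    Vxcomp α 𝒜 x (a * v) z = a * Vxcomp α 𝒜 x v z :=
  restrict_mul_left (T := Set.univ) (fun _ hg _ _ hgm => mul_mem_transporters_iff_of_mem_stabilizer hg hgm)
    ha fun _ _ => trivial

theorem moritaPair_Vxcomp_mul_of_mem {g m n : G} {a c b : A} (ha : a ∈ 𝒜.comp g)
    (hc : c ∈ 𝒜.comp m) (hb : b ∈ 𝒜.comp n) (y : X) :
    moritaPair α 𝒜 x (Vxcomp α 𝒜 x (c * a) y) b =
      moritaPair α 𝒜 x c (a * xVcomp α 𝒜 x b y) := by
  rw [moritaPair_eq_restrict, moritaPair_eq_restrict, Vxcomp_eq_restrict, xVcomp_eq_restrict,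
    restrict_of_mem (𝒜.mul_mem_mul hc ha), restrict_of_mem hb, ite_mul, zero_mul, mul_ite,
    mul_zero, mul_ite, mul_zero, apply_ite (𝒜.restrict _), apply_ite (𝒜.restrict _), map_zero,
    restrict_of_mem (𝒜.mul_mem_mul (𝒜.mul_mem_mul hc ha) hb),
    restrict_of_mem (𝒜.mul_mem_mul hc (𝒜.mul_mem_mul ha hb)), ← ite_and, ← ite_and, ← mul_assoc]
  refine ite_eq_ite_of_ne_zero fun hp => ?_
  have hmg := 𝒜.composable_of_mul_ne_zero hc ha (left_ne_zero_of_mul hp)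
  have hgn := 𝒜.composable_of_mul_ne_zero (𝒜.mul_mem_mul hc ha) hb hp
  rw [𝒢.s_mul m g hmg] at hgn
  rw [← 𝒢.mul_assoc m g n hmg hgn]
  exact and_congr_left fun hl =>
    mem_transporters_iff_of_mul_mem_stabilizer (by rwa [𝒢.s_mul m g hmg]) hl

theorem moritaPair_rSmashAct {f : (G × X) →₀ A} (hf : f ∈ smashSet α 𝒜) (v w : A) :
    moritaPair α 𝒜 x (rSmashAct α 𝒜 x v f) w = moritaPair α 𝒜 x v (lSmashAct α 𝒜 x f w) := by
  apply eq_of_mem_smashSet (hf := hf)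
  · intro f f'
    rw [rSmashAct_add_right, moritaPair_add_left]
  · intro f f'
    rw [lSmashAct_add_left, moritaPair_add_right]
  intro g y a ha _
  rw [rSmashAct_single, lSmashAct_single]
  apply 𝒜.eq_of_homogeneous (u := v)
  · intro v v'
    rw [add_mul, Vxcomp_add, moritaPair_add_left]
  · intro v v'
    rw [moritaPair_add_left]
  intro m c hc
  apply 𝒜.eq_of_homogeneous (u := w)
  · intro w w'
    rw [moritaPair_add_right]
  · intro w w'
    rw [xVcomp_add, mul_add, moritaPair_add_right]
  intro n b hb
  exact moritaPair_Vxcomp_mul_of_mem ha hc hb y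

variable [Finite X]

theorem moritaBrack_apply (w v : A) (p : G × X) :
    moritaBrack α 𝒜 x w v p = 𝒜.proj p.1 (w * Vxcomp α 𝒜 x v p.2) :=
  finsum_finsum_single_apply _ (fun _ => 𝒜.proj_support_finite _) p

theorem moritaBrack_add_left (w w' v : A) :
    moritaBrack α 𝒜 x (w + w') v = moritaBrack α 𝒜 x w v + moritaBrack α 𝒜 x w' v := by
  ext p
  simp only [Finsupp.add_apply, moritaBrack_apply, add_mul, proj_add]

theorem moritaBrack_add_right (w v v' : A) :
    moritaBrack α 𝒜 x w (v + v') = moritaBrack α 𝒜 x w v + moritaBrack α 𝒜 x w v' := by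
  ext p
  simp only [Finsupp.add_apply, moritaBrack_apply, Vxcomp_add, mul_add, proj_add]

theorem moritaBrack_zero_left (v : A) : moritaBrack α 𝒜 x 0 v = 0 := by
  ext p
  simp [moritaBrack_apply, proj_eq_decompose]

theorem moritaBrack_zero_right (w : A) : moritaBrack α 𝒜 x w 0 = 0 := by
  ext p
  simp [moritaBrack_apply, Vxcomp_eq_restrict, proj_eq_decompose]

theorem moritaBrack_mem_smashSet (w v : A) : moritaBrack α 𝒜 x w v ∈ smashSet α 𝒜 := by
  intro p
  rw [moritaBrack_apply]
  refine ⟨𝒜.proj_mem _ _, fun hp => ?_⟩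
  refine mul_mem_supported (S := Set.univ) (T := α.transporters p.2 x)
    (U := {l | p.2 ∈ α.car (𝒢.s l)}) (fun g _ h hh hgh => ?_) (fun _ _ => trivial)
    (restrict_mem_supported _ v) p.1 hp
  show p.2 ∈ α.car (𝒢.s (𝒢.mul g h))
  rw [𝒢.s_mul g h hgh]
  exact hh.1

theorem moritaBrack_of_mem {n m : G} {b c : A} (hb : b ∈ 𝒜.comp n) (hc : c ∈ 𝒜.comp m) {z : X}
    (hm : m ∈ α.transporters z x) :
    moritaBrack α 𝒜 x b c = Finsupp.single (𝒢.mul n m, z) (b * c) := by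
  ext p
  rw [moritaBrack_apply, Vxcomp_eq_restrict, restrict_of_mem hc, Finsupp.single_apply]
  by_cases hpz : p.2 = z
  · subst hpz
    rw [if_pos hm, 𝒜.proj_of_mem (𝒜.mul_mem_mul hb hc)]
    simp [Prod.ext_iff, eq_comm]
  · have hm' : m ∉ α.transporters p.2 x := fun hm' => hpz (eq_of_mem_transporters hm' hm)
    simp [hm', Prod.ext_iff, Ne.symm hpz, proj_eq_decompose]

theorem moritaBrack_mul_left (w : A) {a : A} (ha : a ∈ stabSubalg α 𝒜 x) (v : A) :
    moritaBrack α 𝒜 x (w * a) v = moritaBrack α 𝒜 x w (a * v) := by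
  ext p
  rw [moritaBrack_apply, moritaBrack_apply, Vxcomp_mul_of_mem_stabSubalg ha, mul_assoc]

theorem moritaBrack_lSmashAct_of_mem {g n m : G} {a b c : A} (ha : a ∈ 𝒜.comp g)
    (hb : b ∈ 𝒜.comp n) (hc : c ∈ 𝒜.comp m) {z : X} (hm : m ∈ α.transporters z x) (y : X) :
    moritaBrack α 𝒜 x (a * xVcomp α 𝒜 x b y) c =
      smashMul α (Finsupp.single (g, y) a) (moritaBrack α 𝒜 x b c) := by
  rw [moritaBrack_of_mem hb hc hm, smashMul_single_of_mem ha (𝒜.mul_mem_mul hb hc),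
    xVcomp_eq_restrict, restrict_of_mem hb]
  by_cases hp : a * (b * c) = 0
  · split_ifs <;>
      simp [moritaBrack_of_mem (𝒜.mul_mem_mul ha hb) hc hm, moritaBrack_zero_left, mul_assoc, hp]
  · have hnm := 𝒜.composable_of_mul_ne_zero hb hc (right_ne_zero_of_mul hp)
    have hgn := 𝒜.composable_of_mul_ne_zero ha (𝒜.mul_mem_mul hb hc) hp
    rw [𝒢.t_mul n m hnm] at hgn
    rw [← mem_transporters_iff_act_mul_eq hnm hm]
    split_ifs
    · rw [moritaBrack_of_mem (𝒜.mul_mem_mul ha hb) hc hm, mul_assoc, 𝒢.mul_assoc g n m hgn hnm]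
    · rw [mul_zero, moritaBrack_zero_left]

theorem moritaBrack_lSmashAct {f : (G × X) →₀ A} (hf : f ∈ smashSet α 𝒜) (w : A) {v : A}
    (hv : v ∈ Vxset α 𝒜 x) :
    moritaBrack α 𝒜 x (lSmashAct α 𝒜 x f w) v = smashMul α f (moritaBrack α 𝒜 x w v) := by
  apply eq_of_mem_smashSet (hf := hf)
  · intro f f'
    rw [lSmashAct_add_left, moritaBrack_add_left]
  · intro f f'
    rw [smashMul_add_left]
  intro g y a ha _
  rw [lSmashAct_single]
  apply 𝒜.eq_of_homogeneous (u := w)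
  · intro w w'
    rw [xVcomp_add, mul_add, moritaBrack_add_left]
  · intro w w'
    rw [moritaBrack_add_left, smashMul_add_right]
  intro n b hb
  apply eq_of_mem_supported (hu := mem_Vxset_iff.1 hv)
  · intro v v'
    rw [moritaBrack_add_right]
  · intro v v'
    rw [moritaBrack_add_right, smashMul_add_right]
  rintro m ⟨z, hm⟩ c hc
  exact moritaBrack_lSmashAct_of_mem ha hb hc hm y

theorem moritaBrack_rSmashAct_of_mem {g n m : G} {a b c : A} (ha : a ∈ 𝒜.comp g) {y : X}
    (hy : y ∈ α.car (𝒢.s g)) (hb : b ∈ 𝒜.comp n) (hc : c ∈ 𝒜.comp m) {z : X}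
    (hm : m ∈ α.transporters z x) :
    moritaBrack α 𝒜 x b (Vxcomp α 𝒜 x (c * a) y) =
      smashMul α (moritaBrack α 𝒜 x b c) (Finsupp.single (g, y) a) := by
  rw [moritaBrack_of_mem hb hc hm, smashMul_single_of_mem (𝒜.mul_mem_mul hb hc) ha,
    Vxcomp_eq_restrict, restrict_of_mem (𝒜.mul_mem_mul hc ha)]
  by_cases hp : b * (c * a) = 0
  · by_cases hmg : 𝒢.mul m g ∈ α.transporters y x
    · simp [hmg, moritaBrack_of_mem hb (𝒜.mul_mem_mul hc ha) hmg, mul_assoc, hp]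
    · simp [hmg, moritaBrack_zero_right, mul_assoc, hp]
  · have hmg := 𝒜.composable_of_mul_ne_zero hc ha (right_ne_zero_of_mul hp)
    have hnm := 𝒜.composable_of_mul_ne_zero hb (𝒜.mul_mem_mul hc ha) hp
    rw [𝒢.t_mul m g hmg] at hnm
    have key := mul_mem_transporters_iff_act_eq hmg hy hm
    rw [key]
    split_ifs with hgy
    · rw [moritaBrack_of_mem hb (𝒜.mul_mem_mul hc ha) (key.2 hgy), mul_assoc,
        𝒢.mul_assoc n m g hnm hmg]
    · exact moritaBrack_zero_right _

theorem moritaBrack_rSmashAct {f : (G × X) →₀ A} (hf : f ∈ smashSet α 𝒜) (w : A) {v : A}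
    (hv : v ∈ Vxset α 𝒜 x) :
    moritaBrack α 𝒜 x w (rSmashAct α 𝒜 x v f) = smashMul α (moritaBrack α 𝒜 x w v) f := by
  apply eq_of_mem_smashSet (hf := hf)
  · intro f f'
    rw [rSmashAct_add_right, moritaBrack_add_right]
  · intro f f'
    rw [smashMul_add_right]
  intro g y a ha hy
  rw [rSmashAct_single]
  apply 𝒜.eq_of_homogeneous (u := w)
  · intro w w'
    rw [moritaBrack_add_left]
  · intro w w'
    rw [moritaBrack_add_left, smashMul_add_left]
  intro n b hb
  apply eq_of_mem_supported (hu := mem_Vxset_iff.1 hv)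
  · intro v v'
    rw [add_mul, Vxcomp_add, moritaBrack_add_right]
  · intro v v'
    rw [moritaBrack_add_right, smashMul_add_left]
  rintro m ⟨z, hm⟩ c hc
  exact moritaBrack_rSmashAct_of_mem ha hy hb hc hm

theorem rSmashAct_moritaBrack_of_mem (hsplit : α.Split) {m n m' : G} {c b c' : A}
    (hc : c ∈ 𝒜.comp m) (hb : b ∈ 𝒜.comp n) (hn : x ∈ α.car (𝒢.s n)) (hc' : c' ∈ 𝒜.comp m')
    {z : X} (hm' : m' ∈ α.transporters z x) :
    rSmashAct α 𝒜 x c (moritaBrack α 𝒜 x b c') = moritaPair α 𝒜 x c b * c' := by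
  rw [moritaBrack_of_mem hb hc' hm', rSmashAct_single, Vxcomp_eq_restrict,
    moritaPair_eq_restrict, restrict_of_mem (𝒜.mul_mem_mul hc (𝒜.mul_mem_mul hb hc')),
    restrict_of_mem (𝒜.mul_mem_mul hc hb), ite_mul, zero_mul, ← mul_assoc]
  refine ite_eq_ite_of_ne_zero fun hp => ?_
  have hmn := 𝒜.composable_of_mul_ne_zero hc hb (left_ne_zero_of_mul hp)
  have hnm' := 𝒜.composable_of_mul_ne_zero (𝒜.mul_mem_mul hc hb) hc' hp
  rw [𝒢.s_mul m n hmn] at hnm'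
  rw [← 𝒢.mul_assoc m n m' hmn hnm']
  exact mul_mem_transporters_iff_mem_stabilizer hsplit (by rwa [𝒢.s_mul m n hmn])
    (by rwa [𝒢.s_mul m n hmn]) hm'

theorem rSmashAct_moritaBrack (hsplit : α.Split) (v : A) {w v' : A} (hw : w ∈ xVset α 𝒜 x)
    (hv' : v' ∈ Vxset α 𝒜 x) :
    rSmashAct α 𝒜 x v (moritaBrack α 𝒜 x w v') = moritaPair α 𝒜 x v w * v' := by
  apply 𝒜.eq_of_homogeneous (u := v)
  · intro v v'
    rw [rSmashAct_add_left]
  · intro v v'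
    rw [moritaPair_add_left, add_mul]
  intro m c hc
  apply eq_of_mem_supported (hu := mem_xVset_iff.1 hw)
  · intro w w'
    rw [moritaBrack_add_left, rSmashAct_add_right]
  · intro w w'
    rw [moritaPair_add_right, add_mul]
  intro n hn b hb
  apply eq_of_mem_supported (hu := mem_Vxset_iff.1 hv')
  · intro v v'
    rw [moritaBrack_add_right, rSmashAct_add_right]
  · intro v v'
    rw [mul_add]
  rintro m' ⟨z, hm'⟩ c' hc'
  exact rSmashAct_moritaBrack_of_mem hsplit hc hb hn hc' hm'

theorem lSmashAct_moritaBrack_of_mem (hsplit : α.Split) {n m n' : G} {b c b' : A}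
    (hb : b ∈ 𝒜.comp n) (hc : c ∈ 𝒜.comp m) {z : X} (hm : m ∈ α.transporters z x)
    (hb' : b' ∈ 𝒜.comp n') (hn' : x ∈ α.car (𝒢.s n')) :
    lSmashAct α 𝒜 x (moritaBrack α 𝒜 x b c) b' = b * moritaPair α 𝒜 x c b' := by
  rw [moritaBrack_of_mem hb hc hm, lSmashAct_single, xVcomp_eq_restrict, moritaPair_eq_restrict,
    restrict_of_mem hb', restrict_of_mem (𝒜.mul_mem_mul hc hb'), mul_ite, mul_ite, mul_zero,
    mul_zero, mul_assoc]
  exact ite_eq_ite_of_ne_zero fun hp => mem_transporters_iff_mul_mem_stabilizer hsplit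
    (𝒜.composable_of_mul_ne_zero hc hb' (right_ne_zero_of_mul hp)) hn' hm

theorem lSmashAct_moritaBrack (hsplit : α.Split) (w : A) {v w' : A} (hv : v ∈ Vxset α 𝒜 x)
    (hw' : w' ∈ xVset α 𝒜 x) :
    lSmashAct α 𝒜 x (moritaBrack α 𝒜 x w v) w' = w * moritaPair α 𝒜 x v w' := by
  apply 𝒜.eq_of_homogeneous (u := w)
  · intro w w'
    rw [moritaBrack_add_left, lSmashAct_add_left]
  · intro w w'
    rw [add_mul]
  intro n b hb
  apply eq_of_mem_supported (hu := mem_Vxset_iff.1 hv)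
  · intro v v'
    rw [moritaBrack_add_right, lSmashAct_add_left]
  · intro v v'
    rw [moritaPair_add_left, mul_add]
  rintro m ⟨z, hm⟩ c hc
  apply eq_of_mem_supported (hu := mem_xVset_iff.1 hw')
  · intro w w'
    rw [lSmashAct_add_right]
  · intro w w'
    rw [moritaPair_add_right, mul_add]
  intro n' hn' b' hb'
  exact lSmashAct_moritaBrack_of_mem hsplit hb hc hm hb' hn'

end MoritaContext

theorem morita_context_general
    {G : Type u} (𝒢 : Gpd G) {X : Type v}
    (k : Type*) (A : Type w) [Field k] [Ring A] [Algebra k A] [Finite X]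
    (𝒜 : GpdGrading 𝒢 k A)
    (α : GpdSetAction 𝒢 X) (hsplit : α.Split)
    (x : X) :
    -- `^xV` is a left `A #_α^𝒢 X`-module and a right `A^{𝒢_x}`-module
    (∀ f ∈ smashSet α 𝒜, ∀ w ∈ xVset α 𝒜 x, lSmashAct α 𝒜 x f w ∈ xVset α 𝒜 x) ∧
    (∀ w ∈ xVset α 𝒜 x, ∀ a ∈ stabSubalg α 𝒜 x, w * a ∈ xVset α 𝒜 x) ∧
    -- `V^x` is a left `A^{𝒢_x}`-module and a right `A #_α^𝒢 X`-module
    (∀ a ∈ stabSubalg α 𝒜 x, ∀ v ∈ Vxset α 𝒜 x, a * v ∈ Vxset α 𝒜 x) ∧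
    (∀ v ∈ Vxset α 𝒜 x, ∀ f ∈ smashSet α 𝒜, rSmashAct α 𝒜 x v f ∈ Vxset α 𝒜 x) ∧
    -- `( , )` takes values in `A^{𝒢_x}` and `[ , ]` in `A #_α^𝒢 X`
    (∀ v ∈ Vxset α 𝒜 x, ∀ w ∈ xVset α 𝒜 x, moritaPair α 𝒜 x v w ∈ stabSubalg α 𝒜 x) ∧
    (∀ w ∈ xVset α 𝒜 x, ∀ v ∈ Vxset α 𝒜 x, moritaBrack α 𝒜 x w v ∈ smashSet α 𝒜) ∧
    -- `( , )` is a morphism of `A^{𝒢_x}`-bimodules, balanced over `A #_α^𝒢 X`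
    (∀ v v' w : A, moritaPair α 𝒜 x (v + v') w = moritaPair α 𝒜 x v w + moritaPair α 𝒜 x v' w) ∧
    (∀ v w w' : A, moritaPair α 𝒜 x v (w + w') = moritaPair α 𝒜 x v w + moritaPair α 𝒜 x v w') ∧
    (∀ a ∈ stabSubalg α 𝒜 x, ∀ v ∈ Vxset α 𝒜 x, ∀ w ∈ xVset α 𝒜 x,
      moritaPair α 𝒜 x (a * v) w = a * moritaPair α 𝒜 x v w ∧
      moritaPair α 𝒜 x v (w * a) = moritaPair α 𝒜 x v w * a) ∧
    (∀ v ∈ Vxset α 𝒜 x, ∀ f ∈ smashSet α 𝒜, ∀ w ∈ xVset α 𝒜 x,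
      moritaPair α 𝒜 x (rSmashAct α 𝒜 x v f) w = moritaPair α 𝒜 x v (lSmashAct α 𝒜 x f w)) ∧
    -- `[ , ]` is a morphism of `A #_α^𝒢 X`-bimodules, balanced over `A^{𝒢_x}`
    (∀ w w' v : A, moritaBrack α 𝒜 x (w + w') v = moritaBrack α 𝒜 x w v + moritaBrack α 𝒜 x w' v) ∧
    (∀ w v v' : A, moritaBrack α 𝒜 x w (v + v') = moritaBrack α 𝒜 x w v + moritaBrack α 𝒜 x w v') ∧
    (∀ w ∈ xVset α 𝒜 x, ∀ a ∈ stabSubalg α 𝒜 x, ∀ v ∈ Vxset α 𝒜 x,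
      moritaBrack α 𝒜 x (w * a) v = moritaBrack α 𝒜 x w (a * v)) ∧
    (∀ f ∈ smashSet α 𝒜, ∀ w ∈ xVset α 𝒜 x, ∀ v ∈ Vxset α 𝒜 x,
      moritaBrack α 𝒜 x (lSmashAct α 𝒜 x f w) v = smashMul α f (moritaBrack α 𝒜 x w v) ∧
      moritaBrack α 𝒜 x w (rSmashAct α 𝒜 x v f) = smashMul α (moritaBrack α 𝒜 x w v) f) ∧
    -- the associativity conditions
    (∀ v ∈ Vxset α 𝒜 x, ∀ w ∈ xVset α 𝒜 x, ∀ v' ∈ Vxset α 𝒜 x,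
      rSmashAct α 𝒜 x v (moritaBrack α 𝒜 x w v') = moritaPair α 𝒜 x v w * v') ∧
    (∀ w ∈ xVset α 𝒜 x, ∀ v ∈ Vxset α 𝒜 x, ∀ w' ∈ xVset α 𝒜 x,
      lSmashAct α 𝒜 x (moritaBrack α 𝒜 x w v) w' = w * moritaPair α 𝒜 x v w') := by
  exact ⟨fun f _ w _ => lSmashAct_mem_xVset f w,
    fun _ hw _ ha => mul_mem_xVset_of_mem_stabSubalg hw ha,
    fun _ ha _ hv => mul_mem_Vxset_of_mem_stabSubalg ha hv,
    fun v _ f _ => rSmashAct_mem_Vxset v f,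
    fun v _ w _ => moritaPair_mem_stabSubalg v w,
    fun w _ v _ => moritaBrack_mem_smashSet w v,
    moritaPair_add_left, moritaPair_add_right,
    fun _ ha v _ w hw => ⟨moritaPair_mul_left ha v hw, moritaPair_mul_right v w ha⟩,
    fun v _ _ hf w _ => moritaPair_rSmashAct hf v w,
    moritaBrack_add_left, moritaBrack_add_right,
    fun w _ _ ha v _ => moritaBrack_mul_left w ha v,
    fun _ hf w _ _ hv => ⟨moritaBrack_lSmashAct hf w hv, moritaBrack_rSmashAct hf w hv⟩,
    fun v _ _ hw _ hv' => rSmashAct_moritaBrack hsplit v hw hv',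
    fun w _ _ hv _ hw' => lSmashAct_moritaBrack hsplit w hv hw'⟩

/-- With `^xV = ⊕_{y ∈ X} V_{x,y}`, `V^x = ⊕_{y ∈ X} V_{y,x}`
and the pairings `( , )` and `[ , ]` above, the sextuple
`[A #_α^𝒢 X, V^x, ^xV, A^{𝒢_x}, [ , ], ( , )]` is a Morita context. -/
theorem morita_context
    {G : Type u} (𝒢 : Gpd G) {X : Type v}
    (k : Type*) (A : Type w) [Field k] [Ring A] [Algebra k A] [Finite X]
    (hG₀ : 𝒢.Objs.Finite) (𝒜 : GpdGrading 𝒢 k A)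
    (α : GpdSetAction 𝒢 X) (hsplit : α.Split)
    (x : X) (e : G) (he : 𝒢.obj e) (hx : x ∈ α.car e) :
    -- `^xV` is a left `A #_α^𝒢 X`-module and a right `A^{𝒢_x}`-module
    (∀ f ∈ smashSet α 𝒜, ∀ w ∈ xVset α 𝒜 x, lSmashAct α 𝒜 x f w ∈ xVset α 𝒜 x) ∧
    (∀ w ∈ xVset α 𝒜 x, ∀ a ∈ stabSubalg α 𝒜 x, w * a ∈ xVset α 𝒜 x) ∧
    -- `V^x` is a left `A^{𝒢_x}`-module and a right `A #_α^𝒢 X`-module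
    (∀ a ∈ stabSubalg α 𝒜 x, ∀ v ∈ Vxset α 𝒜 x, a * v ∈ Vxset α 𝒜 x) ∧
    (∀ v ∈ Vxset α 𝒜 x, ∀ f ∈ smashSet α 𝒜, rSmashAct α 𝒜 x v f ∈ Vxset α 𝒜 x) ∧
    -- `( , )` takes values in `A^{𝒢_x}` and `[ , ]` in `A #_α^𝒢 X`
    (∀ v ∈ Vxset α 𝒜 x, ∀ w ∈ xVset α 𝒜 x, moritaPair α 𝒜 x v w ∈ stabSubalg α 𝒜 x) ∧
    (∀ w ∈ xVset α 𝒜 x, ∀ v ∈ Vxset α 𝒜 x, moritaBrack α 𝒜 x w v ∈ smashSet α 𝒜) ∧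
    -- `( , )` is a morphism of `A^{𝒢_x}`-bimodules, balanced over `A #_α^𝒢 X`
    (∀ v v' w : A, moritaPair α 𝒜 x (v + v') w = moritaPair α 𝒜 x v w + moritaPair α 𝒜 x v' w) ∧
    (∀ v w w' : A, moritaPair α 𝒜 x v (w + w') = moritaPair α 𝒜 x v w + moritaPair α 𝒜 x v w') ∧
    (∀ a ∈ stabSubalg α 𝒜 x, ∀ v ∈ Vxset α 𝒜 x, ∀ w ∈ xVset α 𝒜 x,
      moritaPair α 𝒜 x (a * v) w = a * moritaPair α 𝒜 x v w ∧
      moritaPair α 𝒜 x v (w * a) = moritaPair α 𝒜 x v w * a) ∧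
    (∀ v ∈ Vxset α 𝒜 x, ∀ f ∈ smashSet α 𝒜, ∀ w ∈ xVset α 𝒜 x,
      moritaPair α 𝒜 x (rSmashAct α 𝒜 x v f) w = moritaPair α 𝒜 x v (lSmashAct α 𝒜 x f w)) ∧
    -- `[ , ]` is a morphism of `A #_α^𝒢 X`-bimodules, balanced over `A^{𝒢_x}`
    (∀ w w' v : A, moritaBrack α 𝒜 x (w + w') v = moritaBrack α 𝒜 x w v + moritaBrack α 𝒜 x w' v) ∧
    (∀ w v v' : A, moritaBrack α 𝒜 x w (v + v') = moritaBrack α 𝒜 x w v + moritaBrack α 𝒜 x w v') ∧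
    (∀ w ∈ xVset α 𝒜 x, ∀ a ∈ stabSubalg α 𝒜 x, ∀ v ∈ Vxset α 𝒜 x,
      moritaBrack α 𝒜 x (w * a) v = moritaBrack α 𝒜 x w (a * v)) ∧
    (∀ f ∈ smashSet α 𝒜, ∀ w ∈ xVset α 𝒜 x, ∀ v ∈ Vxset α 𝒜 x,
      moritaBrack α 𝒜 x (lSmashAct α 𝒜 x f w) v = smashMul α f (moritaBrack α 𝒜 x w v) ∧
      moritaBrack α 𝒜 x w (rSmashAct α 𝒜 x v f) = smashMul α (moritaBrack α 𝒜 x w v) f) ∧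
    -- the associativity conditions
    (∀ v ∈ Vxset α 𝒜 x, ∀ w ∈ xVset α 𝒜 x, ∀ v' ∈ Vxset α 𝒜 x,
      rSmashAct α 𝒜 x v (moritaBrack α 𝒜 x w v') = moritaPair α 𝒜 x v w * v') ∧
    (∀ w ∈ xVset α 𝒜 x, ∀ v ∈ Vxset α 𝒜 x, ∀ w' ∈ xVset α 𝒜 x,
      lSmashAct α 𝒜 x (moritaBrack α 𝒜 x w v) w' = w * moritaPair α 𝒜 x v w') :=
  morita_context_general 𝒢 k A 𝒜 α hsplit x

end
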